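/- Let Z be a finite set, π_ref and π* probability distributions on Z with π_ref having full support and π*(z) = π_ref(z)·exp(Q(z)/β)/Z_β for Q : Z → ℝ, β > 0, Z_β = ∑_z π_ref(z)·exp(Q(z)/β). Define V := ∑_z π_ref(z)·Q(z) and for each action a ∈ Z the advantage A(a) := Q(a) − V. Then A(a) = β·(log(π*(a)/π_ref(a)) + D_KL(π_ref‖π*)), where D_KL(π_ref‖π*) = ∑_z π_ref(z)·log(π_ref(z)/π*(z)). -/

import Mathlib

/-! Since π* / π_ref = exp (Q / β) / Z_β, the log-ratio is Q / β − log Z_β at every point. Averaging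
its negative against π_ref gives D_KL(π_ref ‖ π*) = log Z_β − V / β, so adding the two makes log Z_β
cancel and leaves (Q(a) − V) / β. -/

open Real Finset

section GibbsTilt

variable {ι : Type*} {p q f : ι → ℝ} {c : ℝ}

lemma log_div_of_eq_mul_exp_div (hp : ∀ z, 0 < p z) (hc : c ≠ 0)
    (hq : ∀ z, q z = p z * exp (f z) / c) (z : ι) :
    log (q z / p z) = f z - log c := by
  have hratio : q z / p z = exp (f z) / c := by
    rw [hq z]
    field_simp [(hp z).ne']
  rw [hratio, log_div (exp_ne_zero _) hc, log_exp]

lemma sum_mul_log_div_of_eq_mul_exp_div [Fintype ι] (hp : ∀ z, 0 < p z) (hsum : ∑ z, p z = 1)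
    (hc : c ≠ 0) (hq : ∀ z, q z = p z * exp (f z) / c) :
    ∑ z, p z * log (p z / q z) = log c - ∑ z, p z * f z := by
  have hlog (z : ι) : log (p z / q z) = log c - f z := by
    rw [← inv_div, log_inv, log_div_of_eq_mul_exp_div hp hc hq z, neg_sub]
  simp only [hlog, mul_sub, sum_sub_distrib, ← sum_mul, hsum, one_mul]

lemma sum_mul_exp_pos [Fintype ι] (hp : ∀ z, 0 < p z) (hsum : ∑ z, p z = 1) :
    0 < ∑ z, p z * exp (f z) := by
  have hne : (univ : Finset ι).Nonempty := nonempty_of_sum_ne_zero (hsum ▸ one_ne_zero)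
  exact sum_pos (fun z _ ↦ mul_pos (hp z) (exp_pos _)) hne

end GibbsTilt

theorem stmt_8 {Z : Type*} [Fintype Z]
    (πref : Z → ℝ) (hpos : ∀ z, 0 < πref z) (hsum : ∑ z, πref z = 1)
    (Q : Z → ℝ) (β : ℝ) (hβ : 0 < β)
    (Zβ : ℝ) (hZβ : Zβ = ∑ z, πref z * Real.exp (Q z / β))
    (πstar : Z → ℝ)
    (hπstar : ∀ z, πstar z = πref z * Real.exp (Q z / β) / Zβ)
    (V : ℝ) (hV : V = ∑ z, πref z * Q z)
    (A : Z → ℝ) (hA : ∀ a, A a = Q a - V) :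
    ∀ a, A a = β * (Real.log (πstar a / πref a) +
      ∑ z, πref z * Real.log (πref z / πstar z)) := by
  intro a
  have hZβ_ne : Zβ ≠ 0 := hZβ ▸ (sum_mul_exp_pos hpos hsum).ne'
  have hV_div : ∑ z, πref z * (Q z / β) = V / β := by
    simp only [hV, sum_div, mul_div_assoc]
  rw [hA, log_div_of_eq_mul_exp_div hpos hZβ_ne hπstar,
    sum_mul_log_div_of_eq_mul_exp_div hpos hsum hZβ_ne hπstar, hV_div]
  field_simp
  ring
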